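/- Let r > 0 and let Ω₁ denote the set of bounded injective holomorphic functions ζ : D(0, r) → ℂ with ζ(0) = 0, equipped with the sup norm. Fix ζ₀ ∈ Ω₁ with ζ₀'(0) ≠ 0, and set 3ρ := inf_{|z| = r/2} |ζ₀(z)| > 0. Then there exist constants C, S > 0 such that for all ξ ∈ ℂ with |ξ| < ρ and all ζ₁, ζ₂ ∈ Ω₁ with ‖ζ_j - ζ₀‖_∞ < S, the preimages z_j = ζ_j⁻¹(ξ) (in D(0, r/2)) exist and satisfy |z₁ - z₂| ≤ C · ‖ζ₁ - ζ₂‖_∞. -/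

import Mathlib

/-!
Injectivity forces `ζ₀' ≠ 0` on `D(0, r)`: at a critical point `z₀`, `ζ₀ - ζ₀ z₀` is the `k`-th
power (`k ≥ 2`) of a local coordinate, so `ζ₀` is `k`-to-one near `z₀`. Hence `ζ₀` is
strictly differentiable with nonzero derivative and injective on the compact disc `D̄(0, r/2)`,
which gives `c |a - b| ≤ |ζ₀ a - ζ₀ b|` there. By Cauchy's estimate, a perturbation of sup-size
`S ≤ c r / 8` is `c/2`-Lipschitz on `D̄(0, r/2)`, so `(c/2) |a - b| ≤ |ζⱼ a - ζⱼ b|` as well.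
Since `|ζⱼ| ≥ 2ρ` on `|z| = r/2`, the open mapping theorem gives the preimages, and
`(c/2) |z₁ - z₂| ≤ |ζ₂ z₁ - ζ₂ z₂| = |ζ₂ z₁ - ζ₁ z₁| ≤ ‖ζ₁ - ζ₂‖_∞` yields `C = 2/c`.
-/

open Metric Set Complex Filter Topology

theorem Set.InjOn.frequently_ne {X Y : Type*} [TopologicalSpace X] {f : X → Y} {U : Set X}
    {x : X} [(𝓝[≠] x).NeBot] (hi : InjOn f U) (hU : U ∈ 𝓝 x) : ∃ᶠ z in 𝓝 x, f z ≠ f x := by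
  refine Frequently.filter_mono (Eventually.frequently ?_) (nhdsWithin_le_nhds (s := {x}ᶜ))
  filter_upwards [self_mem_nhdsWithin, mem_nhdsWithin_of_mem_nhds hU] with z hzx hzU hfz
  exact hzx (hi hzU (mem_of_mem_nhds hU) hfz)

theorem not_injOn_pow_of_mem_nhds_zero {k : ℕ} (hk : 2 ≤ k) {W : Set ℂ} (hW : W ∈ 𝓝 0) :
    ¬ InjOn (· ^ k) W := by
  intro hi
  obtain ⟨ω, hω⟩ : ∃ ω : ℂ, IsPrimitiveRoot ω k := ⟨_, isPrimitiveRoot_exp k (by omega)⟩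
  have hωW : ∀ᶠ w in 𝓝[≠] (0 : ℂ), w ∈ W ∧ ω * w ∈ W :=
    nhdsWithin_le_nhds <| Filter.inter_mem hW <|
      (continuous_const_mul ω).continuousAt.preimage_mem_nhds (by rwa [mul_zero])
  obtain ⟨w, ⟨hw, hωw⟩, hw0⟩ := (hωW.and self_mem_nhdsWithin).exists
  have hωw_eq : ω * w = 1 * w := by
    rw [one_mul]; exact hi hωw hw (by simp [mul_pow, hω.pow_eq_one])
  exact hω.ne_one (by omega) (mul_right_cancel₀ hw0 hωw_eq)

theorem AnalyticAt.exists_eventually_pow_eq {h : ℂ → ℂ} {z₀ : ℂ} (hh : AnalyticAt ℂ h z₀)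
    (h0 : h z₀ ≠ 0) {k : ℕ} (hk : k ≠ 0) :
    ∃ φ : ℂ → ℂ, AnalyticAt ℂ φ z₀ ∧ φ z₀ ≠ 0 ∧ ∀ᶠ z in 𝓝 z₀, φ z ^ k = h z := by
  refine ⟨fun z ↦ h z₀ ^ (k⁻¹ : ℂ) * (h z / h z₀) ^ (k⁻¹ : ℂ), ?_, ?_, .of_forall fun z ↦ ?_⟩
  · exact analyticAt_const.mul <| (hh.div analyticAt_const h0).cpow analyticAt_const
      (by simp [h0])
  · simp [h0]
  · simp only [mul_pow, cpow_nat_inv_pow _ hk]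
    field_simp

theorem AnalyticAt.exists_eventually_sub_eq_pow {f : ℂ → ℂ} {z₀ : ℂ} (hf : AnalyticAt ℂ f z₀)
    {k : ℕ} (hk : analyticOrderAt (f · - f z₀) z₀ = k) :
    ∃ ψ : ℂ → ℂ, AnalyticAt ℂ ψ z₀ ∧ ψ z₀ = 0 ∧ deriv ψ z₀ ≠ 0 ∧
      ∀ᶠ z in 𝓝 z₀, f z - f z₀ = ψ z ^ k := by
  obtain ⟨h, hh, hh0, hfh⟩ := (analyticOrderAt_eq_natCast (hf.sub analyticAt_const)).mp hk
  have hk0 : k ≠ 0 := by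
    rintro rfl
    have h_at := hfh.self_of_nhds
    simp only [Pi.sub_apply, sub_self, pow_zero, one_smul] at h_at
    exact hh0 h_at.symm
  obtain ⟨φ, hφ, hφ0, hφh⟩ := hh.exists_eventually_pow_eq hh0 hk0
  have hψ' : HasDerivAt (fun z ↦ (z - z₀) * φ z) (φ z₀) z₀ := by
    simpa using ((hasDerivAt_id z₀).sub_const z₀).fun_mul hφ.differentiableAt.hasDerivAt
  refine ⟨fun z ↦ (z - z₀) * φ z, (analyticAt_id.sub analyticAt_const).mul hφ, by simp,
    hψ'.deriv ▸ hφ0, ?_⟩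
  filter_upwards [hfh, hφh] with z hz hφz
  rw [mul_pow, hφz]
  exact hz

theorem AnalyticAt.deriv_ne_zero_of_injOn {f : ℂ → ℂ} {z₀ : ℂ} {U : Set ℂ}
    (hf : AnalyticAt ℂ f z₀) (hU : U ∈ 𝓝 z₀) (hi : InjOn f U) : deriv f z₀ ≠ 0 := by
  intro hd
  have htop : analyticOrderAt (f · - f z₀) z₀ ≠ ⊤ := fun htop ↦
    hi.frequently_ne hU (by simpa [sub_eq_zero] using analyticOrderAt_eq_top.mp htop)
  obtain ⟨k, hk⟩ := ENat.ne_top_iff_exists.mp htop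
  have hk2 : 2 ≤ k := by
    have h1 : 1 ≤ analyticOrderAt (deriv f) z₀ :=
      Order.one_le_iff_ne_zero.mpr (analyticOrderAt_ne_zero.mpr ⟨hf.deriv, hd⟩)
    have h2 : (2 : ℕ∞) ≤ k := by
      rw [hk, ← hf.analyticOrderAt_deriv_add_one, ← one_add_one_eq_two]
      gcongr
    exact_mod_cast h2
  obtain ⟨ψ, hψ, hψ0, hψ', hfψ⟩ := hf.exists_eventually_sub_eq_pow hk.symm
  have himg : ψ '' (U ∩ {z | f z - f z₀ = ψ z ^ k}) ∈ 𝓝 0 := by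
    rw [← hψ0, ← hψ.hasStrictDerivAt.map_nhds_eq hψ']
    exact image_mem_map (inter_mem hU hfψ)
  refine not_injOn_pow_of_mem_nhds_zero hk2 himg ?_
  rintro _ ⟨a, ⟨haU, ha : f a - f z₀ = ψ a ^ k⟩, rfl⟩ _ ⟨b, ⟨hbU, hb : f b - f z₀ = ψ b ^ k⟩, rfl⟩
    (hab : ψ a ^ k = ψ b ^ k)
  rw [hi haU hbU (by linear_combination ha - hb + hab)]

theorem IsCompact.exists_pos_forall_mul_le {X : Type*} [TopologicalSpace X] {K : Set X}
    (hK : IsCompact K) {u v : X → ℝ} (hu : ∀ x, 0 ≤ u x)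
    (hloc : ∀ x ∈ K, ∃ c > 0, ∀ᶠ y in 𝓝[K] x, c * u y ≤ v y) :
    ∃ c > 0, ∀ y ∈ K, c * u y ≤ v y := by
  refine hK.induction_on (p := fun t ↦ ∃ c > 0, ∀ y ∈ t, c * u y ≤ v y)
    ⟨1, one_pos, by simp⟩ (fun s t hst ⟨c, hc, ht⟩ ↦ ⟨c, hc, fun y hy ↦ ht y (hst hy)⟩)
    (fun s t ⟨c, hc, hs⟩ ⟨d, hd, ht⟩ ↦ ⟨min c d, lt_min hc hd, ?_⟩) fun x hx ↦ ?_
  · rintro y (hy | hy)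
    · exact (mul_le_mul_of_nonneg_right (min_le_left c d) (hu y)).trans (hs y hy)
    · exact (mul_le_mul_of_nonneg_right (min_le_right c d) (hu y)).trans (ht y hy)
  · obtain ⟨c, hc, hev⟩ := hloc x hx
    exact ⟨_, hev, c, hc, fun y hy ↦ hy⟩

theorem HasStrictDerivAt.eventually_mul_norm_sub_le {𝕜 F : Type*} [NontriviallyNormedField 𝕜]
    [NormedAddCommGroup F] [NormedSpace 𝕜 F] {f : 𝕜 → F} {f' : F} {x : 𝕜}
    (hf : HasStrictDerivAt f f' x) :
    ∀ᶠ p in 𝓝 (x, x), ‖f'‖ / 2 * ‖p.1 - p.2‖ ≤ ‖f p.1 - f p.2‖ := by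
  rcases eq_or_ne f' 0 with rfl | hf'
  · simp
  filter_upwards [hf.isLittleO.def (by positivity : 0 < ‖f'‖ / 2)] with p hp
  have h := norm_sub_norm_le ((p.1 - p.2) • f') (f p.1 - f p.2)
  rw [norm_smul, norm_sub_rev ((p.1 - p.2) • f')] at h
  rw [ContinuousLinearMap.toSpanSingleton_apply] at hp
  linarith

theorem IsCompact.exists_pos_mul_norm_sub_le {𝕜 F : Type*} [NontriviallyNormedField 𝕜]
    [NormedAddCommGroup F] [NormedSpace 𝕜 F] {f f' : 𝕜 → F} {K : Set 𝕜} (hK : IsCompact K)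
    (hf : ∀ x ∈ K, HasStrictDerivAt f (f' x) x) (hf' : ∀ x ∈ K, f' x ≠ 0) (hi : InjOn f K) :
    ∃ c > 0, ∀ a ∈ K, ∀ b ∈ K, c * ‖a - b‖ ≤ ‖f a - f b‖ := by
  have hloc : ∀ p ∈ K ×ˢ K, ∃ c > 0, ∀ᶠ q in 𝓝[K ×ˢ K] p, c * ‖q.1 - q.2‖ ≤ ‖f q.1 - f q.2‖ := by
    rintro ⟨a, b⟩ ⟨ha, hb⟩
    rcases eq_or_ne a b with rfl | hab
    · exact ⟨_, by simpa using hf' a ha, nhdsWithin_le_nhds (hf a ha).eventually_mul_norm_sub_le⟩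
    · have hpos : 0 < ‖f a - f b‖ / ‖a - b‖ := div_pos
        (norm_pos_iff.2 (sub_ne_zero.2 (hi.ne ha hb hab))) (norm_pos_iff.2 (sub_ne_zero.2 hab))
      have hsub : ContinuousAt (fun q : 𝕜 × 𝕜 ↦ q.1 - q.2) (a, b) :=
        continuousAt_fst.sub continuousAt_snd
      have hratio : ContinuousAt (fun q : 𝕜 × 𝕜 ↦ ‖f q.1 - f q.2‖ / ‖q.1 - q.2‖) (a, b) :=
        (((hf a ha).hasDerivAt.continuousAt.comp continuousAt_fst).sub
          ((hf b hb).hasDerivAt.continuousAt.comp continuousAt_snd)).norm.div hsub.norm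
          (norm_ne_zero_iff.2 (sub_ne_zero.2 hab))
      refine ⟨_, half_pos hpos, nhdsWithin_le_nhds ?_⟩
      filter_upwards [hratio.eventually (lt_mem_nhds (half_lt_self hpos)),
        hsub.eventually_ne (sub_ne_zero.2 hab)] with q hq hq0
      exact ((lt_div_iff₀ (norm_pos_iff.2 hq0)).1 hq).le
  obtain ⟨c, hc, h⟩ := (hK.prod hK).exists_pos_forall_mul_le (fun _ ↦ norm_nonneg _) hloc
  exact ⟨c, hc, fun a ha b hb ↦ h (a, b) ⟨ha, hb⟩⟩

theorem norm_sub_le_of_differentiableOn_ball {F : Type*} [NormedAddCommGroup F]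
    [NormedSpace ℂ F] {h : ℂ → F} {c : ℂ} {r M : ℝ} (hr : 0 < r)
    (hd : DifferentiableOn ℂ h (ball c r)) (hM : ∀ z ∈ ball c r, ‖h z‖ ≤ M) {a b : ℂ}
    (ha : a ∈ closedBall c (r / 2)) (hb : b ∈ closedBall c (r / 2)) :
    ‖h a - h b‖ ≤ 4 * M / r * ‖a - b‖ := by
  have hsub : ∀ z ∈ closedBall c (r / 2), closedBall z (r / 4) ⊆ ball c r := fun z hz w hw ↦
    mem_ball.2 <| by linarith [dist_triangle w z c, mem_closedBall.1 hw, mem_closedBall.1 hz]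
  have hderiv : ∀ z ∈ closedBall c (r / 2), ‖deriv h z‖ ≤ 4 * M / r := fun z hz ↦ by
    have hdc : DiffContOnCl ℂ h (ball z (r / 4)) :=
      (hd.mono <| closure_ball z (show r / 4 ≠ 0 by positivity) ▸ hsub z hz).diffContOnCl
    convert norm_deriv_le_of_forall_mem_sphere_norm_le (by positivity) hdc
      fun w hw ↦ hM w (hsub z hz (sphere_subset_closedBall hw)) using 1
    field_simp
  have hdiff : ∀ z ∈ closedBall c (r / 2), DifferentiableAt ℂ h z := fun z hz ↦
    hd.differentiableAt (isOpen_ball.mem_nhds (hsub z hz (mem_closedBall_self (by positivity))))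
  simpa [dist_eq_norm] using
    (convex_closedBall c (r / 2)).norm_image_sub_le_of_norm_deriv_le hdiff hderiv hb ha

theorem DiffContOnCl.exists_mem_ball_eq {f : ℂ → ℂ} {c : ℂ} {R ε : ℝ}
    (hf : DiffContOnCl ℂ f (ball c R)) (hR : 0 < R) (hε : ∀ z ∈ sphere c R, ε ≤ ‖f z - f c‖)
    (hc : ∃ᶠ z in 𝓝 c, f z ≠ f c) {ξ : ℂ} (hξ : ‖ξ - f c‖ < ε / 2) :
    ∃ z ∈ ball c R, f z = ξ := by
  obtain ⟨z, hz, rfl⟩ := hf.ball_subset_image_closedBall hR hε hc (mem_ball_iff_norm.2 hξ)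
  refine ⟨z, ?_, rfl⟩
  rcases (mem_closedBall.1 hz).lt_or_eq with hlt | heq
  · exact hlt
  · linarith [hε z heq, norm_nonneg (f z - f c)]

theorem exists_mem_ball_half_eq_of_dist_lt {r ρ S : ℝ} (hr : 0 < r) (hSρ : S ≤ ρ)
    {ζ₀ ζ : ℂ → ℂ} (hρ3 : ∀ z : ℂ, ‖z‖ = r / 2 → 3 * ρ ≤ ‖ζ₀ z‖)
    (hd : DifferentiableOn ℂ ζ (ball 0 r)) (hi : InjOn ζ (ball 0 r)) (h0 : ζ 0 = 0)
    (hS : ∀ z ∈ ball (0 : ℂ) r, dist (ζ z) (ζ₀ z) < S) {ξ : ℂ} (hξ : ‖ξ‖ < ρ) :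
    ∃ z ∈ ball (0 : ℂ) (r / 2), ζ z = ξ := by
  have hK : closedBall (0 : ℂ) (r / 2) ⊆ ball 0 r := closedBall_subset_ball (by linarith)
  have hsphere : ∀ z ∈ sphere (0 : ℂ) (r / 2), 2 * ρ ≤ ‖ζ z - ζ 0‖ := fun z hz ↦ by
    have hz' := hS z (hK (sphere_subset_closedBall hz))
    rw [dist_eq_norm] at hz'
    rw [h0, sub_zero]
    linarith [hρ3 z (mem_sphere_zero_iff_norm.1 hz), norm_sub_norm_le (ζ₀ z) (ζ z),
      norm_sub_rev (ζ₀ z) (ζ z)]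
  exact (hd.diffContOnCl_ball hK).exists_mem_ball_eq (by positivity) hsphere
    (hi.frequently_ne (isOpen_ball.mem_nhds (mem_ball_self hr))) (by rw [h0, sub_zero]; linarith)

theorem mul_norm_sub_le_of_dist_lt {r c S : ℝ} (hr : 0 < r) (hSc : S ≤ c * r / 8)
    {ζ₀ ζ : ℂ → ℂ} (hζ₀d : DifferentiableOn ℂ ζ₀ (ball 0 r))
    (hζ₀c : ∀ a ∈ closedBall (0 : ℂ) (r / 2), ∀ b ∈ closedBall (0 : ℂ) (r / 2),
      c * ‖a - b‖ ≤ ‖ζ₀ a - ζ₀ b‖)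
    (hd : DifferentiableOn ℂ ζ (ball 0 r)) (hS : ∀ z ∈ ball (0 : ℂ) r, dist (ζ z) (ζ₀ z) < S)
    {a b : ℂ} (ha : a ∈ closedBall (0 : ℂ) (r / 2)) (hb : b ∈ closedBall (0 : ℂ) (r / 2)) :
    c / 2 * ‖a - b‖ ≤ ‖ζ a - ζ b‖ := by
  have hdiff := norm_sub_le_of_differentiableOn_ball hr (hζ₀d.sub hd)
    (fun z hz ↦ by simpa [dist_eq_norm, norm_sub_rev] using (hS z hz).le) ha hb
  have hLip : 4 * S / r * ‖a - b‖ ≤ c / 2 * ‖a - b‖ := by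
    refine mul_le_mul_of_nonneg_right ?_ (norm_nonneg _)
    rw [div_le_iff₀ hr]
    linarith
  have htri : ‖ζ₀ a - ζ₀ b‖ ≤ ‖ζ a - ζ b‖ + ‖(ζ₀ - ζ) a - (ζ₀ - ζ) b‖ :=
    calc ‖ζ₀ a - ζ₀ b‖ = ‖(ζ a - ζ b) + ((ζ₀ - ζ) a - (ζ₀ - ζ) b)‖ := by
          rw [Pi.sub_apply, Pi.sub_apply]; abel_nf
      _ ≤ _ := norm_add_le _ _
  linarith [hζ₀c a ha b hb]

theorem stmt14_general (r : ℝ) (hr : 0 < r) (ζ₀ : ℂ → ℂ)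
    (hζ₀d : DifferentiableOn ℂ ζ₀ (ball (0 : ℂ) r))
    (hζ₀i : InjOn ζ₀ (ball (0 : ℂ) r))
    (ρ : ℝ) (hρ : 0 < ρ)
    (hρ3 : ∀ z : ℂ, ‖z‖ = r / 2 → 3 * ρ ≤ ‖ζ₀ z‖) :
    ∃ C > 0, ∃ S > 0, ∀ ξ : ℂ, ‖ξ‖ < ρ →
      ∀ ζ₁ ζ₂ : ℂ → ℂ,
        DifferentiableOn ℂ ζ₁ (ball (0 : ℂ) r) → InjOn ζ₁ (ball (0 : ℂ) r) → ζ₁ 0 = 0 →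
        DifferentiableOn ℂ ζ₂ (ball (0 : ℂ) r) → InjOn ζ₂ (ball (0 : ℂ) r) → ζ₂ 0 = 0 →
        (∀ z ∈ ball (0 : ℂ) r, dist (ζ₁ z) (ζ₀ z) < S) →
        (∀ z ∈ ball (0 : ℂ) r, dist (ζ₂ z) (ζ₀ z) < S) →
        ∃ z₁ ∈ ball (0 : ℂ) (r / 2), ∃ z₂ ∈ ball (0 : ℂ) (r / 2),
          ζ₁ z₁ = ξ ∧ ζ₂ z₂ = ξ ∧
          ∀ ε : ℝ, 0 ≤ ε → (∀ z ∈ ball (0 : ℂ) r, dist (ζ₁ z) (ζ₂ z) ≤ ε) →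
            dist z₁ z₂ ≤ C * ε := by
  have hK : closedBall (0 : ℂ) (r / 2) ⊆ ball 0 r := closedBall_subset_ball (by linarith)
  have hζ₀a : ∀ x ∈ closedBall (0 : ℂ) (r / 2), AnalyticAt ℂ ζ₀ x := fun x hx ↦
    hζ₀d.analyticAt (isOpen_ball.mem_nhds (hK hx))
  obtain ⟨c, hc, hζ₀c⟩ := (isCompact_closedBall (0 : ℂ) (r / 2)).exists_pos_mul_norm_sub_le
    (fun x hx ↦ (hζ₀a x hx).hasStrictDerivAt)
    (fun x hx ↦ (hζ₀a x hx).deriv_ne_zero_of_injOn (isOpen_ball.mem_nhds (hK hx)) hζ₀i)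
    (hζ₀i.mono hK)
  refine ⟨2 / c, by positivity, min ρ (c * r / 8), by positivity,
    fun ξ hξ ζ₁ ζ₂ h₁d h₁i h₁0 h₂d h₂i h₂0 h₁S h₂S ↦ ?_⟩
  obtain ⟨z₁, hz₁, rfl⟩ :=
    exists_mem_ball_half_eq_of_dist_lt hr (min_le_left _ _) hρ3 h₁d h₁i h₁0 h₁S hξ
  obtain ⟨z₂, hz₂, hz₂ξ⟩ :=
    exists_mem_ball_half_eq_of_dist_lt hr (min_le_left _ _) hρ3 h₂d h₂i h₂0 h₂S hξ
  refine ⟨z₁, hz₁, z₂, hz₂, rfl, hz₂ξ, fun ε _ hε ↦ ?_⟩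
  have hlow := mul_norm_sub_le_of_dist_lt hr (min_le_right _ _) hζ₀d hζ₀c h₂d h₂S
    (ball_subset_closedBall hz₁) (ball_subset_closedBall hz₂)
  rw [hz₂ξ, ← dist_eq_norm, ← dist_eq_norm, dist_comm (ζ₂ z₁)] at hlow
  calc dist z₁ z₂ = 2 / c * (c / 2 * dist z₁ z₂) := by field_simp
    _ ≤ 2 / c * ε := by gcongr; exact hlow.trans (hε z₁ (hK (ball_subset_closedBall hz₁)))

/-- Lemma A.1: the evaluation of the inverse function at a point is locally
    Lipschitz, in the sup norm, on the space of bounded univalent functions on D(0,r)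
    fixing the origin. -/
theorem stmt14 (r : ℝ) (hr : 0 < r) (ζ₀ : ℂ → ℂ)
    (hζ₀d : DifferentiableOn ℂ ζ₀ (ball (0 : ℂ) r))
    (hζ₀i : InjOn ζ₀ (ball (0 : ℂ) r))
    (hζ₀0 : ζ₀ 0 = 0)
    (hζ₀b : ∃ B, ∀ z ∈ ball (0 : ℂ) r, ‖ζ₀ z‖ ≤ B)
    (hζ₀' : deriv ζ₀ 0 ≠ 0)
    (ρ : ℝ) (hρ : 0 < ρ)
    (hρ3 : ∀ z : ℂ, ‖z‖ = r / 2 → 3 * ρ ≤ ‖ζ₀ z‖) :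
    ∃ C > 0, ∃ S > 0, ∀ ξ : ℂ, ‖ξ‖ < ρ →
      ∀ ζ₁ ζ₂ : ℂ → ℂ,
        DifferentiableOn ℂ ζ₁ (ball (0 : ℂ) r) → InjOn ζ₁ (ball (0 : ℂ) r) → ζ₁ 0 = 0 →
        DifferentiableOn ℂ ζ₂ (ball (0 : ℂ) r) → InjOn ζ₂ (ball (0 : ℂ) r) → ζ₂ 0 = 0 →
        (∀ z ∈ ball (0 : ℂ) r, dist (ζ₁ z) (ζ₀ z) < S) →
        (∀ z ∈ ball (0 : ℂ) r, dist (ζ₂ z) (ζ₀ z) < S) →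
        ∃ z₁ ∈ ball (0 : ℂ) (r / 2), ∃ z₂ ∈ ball (0 : ℂ) (r / 2),
          ζ₁ z₁ = ξ ∧ ζ₂ z₂ = ξ ∧
          ∀ ε : ℝ, 0 ≤ ε → (∀ z ∈ ball (0 : ℂ) r, dist (ζ₁ z) (ζ₂ z) ≤ ε) →
            dist z₁ z₂ ≤ C * ε :=
  stmt14_general r hr ζ₀ hζ₀d hζ₀i ρ hρ hρ3
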